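/- arXiv:1305.3960 — 4 statements merged into one kernel-verified Lean document; each statement's English description precedes it below -/
import Mathlib

section
/- Let P₁, …, P_{d+1} be finite point sets in ℝ^d. If x ∈ ⋂_{i=1}^{d+1} conv(P_i), then there exist points p₁ ∈ P₁, …, p_{d+1} ∈ P_{d+1} such that x ∈ conv{p₁, …, p_{d+1}}. -/
/-!
Among all colorful selections `p`, take one whose convex hull `K` is closest to `x`, and let `y`
be the point of `K` nearest to `x`. If `y ≠ x`, the hyperplane through `y` orthogonal to `x - y`
supports `K`, so by Carathéodory's theorem inside this hyperplane, which has dimension `d - 1`, the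
point `y` is a convex combination of at most `d` of the points `p i`: some color `j` is not used.
Since `x ∈ conv P_j`, some `q ∈ P_j` lies strictly on the side of `x`; replacing `p j` by `q` keeps
`y` in the hull and adds a direction along which one gets closer to `x`, contradicting minimality.
-/

open Metric Set Module RealInnerProductSpace

theorem real_inner_sub_sub_nonpos_of_forall_dist_le {F : Type*} [NormedAddCommGroup F]
    [InnerProductSpace ℝ F] {K : Set F} (hK : Convex ℝ K) {x y w : F} (hy : y ∈ K)
    (hmin : ∀ z ∈ K, dist x y ≤ dist x z) (hw : w ∈ K) : ⟪x - y, w - y⟫ ≤ 0 := by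
  have : Nonempty K := ⟨⟨y, hy⟩⟩
  refine (norm_eq_iInf_iff_real_inner_le_zero hK hy).1 (le_antisymm ?_ ?_) w hw
  · exact le_ciInf fun z => by simpa only [dist_eq_norm] using hmin z z.2
  · exact ciInf_le ⟨0, forall_mem_range.2 fun z : K => norm_nonneg (x - z)⟩ ⟨y, hy⟩

theorem eq_of_forall_le_of_sum_mul_eq {𝕜 ι : Type*} [Field 𝕜] [LinearOrder 𝕜]
    [IsStrictOrderedRing 𝕜] [Fintype ι] {w a : ι → 𝕜} {m : 𝕜} (hw : ∀ i, 0 < w i)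
    (hw₁ : ∑ i, w i = 1) (hm : ∑ i, w i * a i = m) (ha : ∀ i, a i ≤ m) (i : ι) : a i = m := by
  by_contra hne
  have : ∑ i, w i * a i < ∑ i, w i * m :=
    Finset.sum_lt_sum (fun j _ => mul_le_mul_of_nonneg_left (ha j) (hw j).le)
      ⟨i, Finset.mem_univ i, mul_lt_mul_of_pos_left (lt_of_le_of_ne (ha i) hne) (hw i)⟩
  rw [← Finset.sum_mul, hw₁, one_mul, hm] at this
  exact lt_irrefl m this

theorem AffineIndependent.card_le_finrank_of_apply_eq {k V ι : Type*} [Field k]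
    [AddCommGroup V] [Module k V] [FiniteDimensional k V] [Fintype ι] {p : ι → V}
    (hp : AffineIndependent k p) {f : Dual k V} (hf : f ≠ 0) {c : k} (hc : ∀ i, f (p i) = c) :
    Fintype.card ι ≤ finrank k V := by
  have hspan : vectorSpan k (range p) ≤ LinearMap.ker f := by
    rw [vectorSpan_def, Submodule.span_le]
    rintro _ ⟨_, ⟨i, rfl⟩, _, ⟨j, rfl⟩, rfl⟩
    simp [hc]
  calc Fintype.card ι ≤ finrank k (vectorSpan k (range p)) + 1 := hp.card_le_finrank_succ
    _ ≤ finrank k (LinearMap.ker f) + 1 := by gcongr; exact Submodule.finrank_mono hspan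
    _ = finrank k V := Dual.finrank_ker_add_one_of_ne_zero hf

theorem exists_mem_convexHull_image_compl_of_le {𝕜 V ι : Type*} [Field 𝕜] [LinearOrder 𝕜]
    [IsStrictOrderedRing 𝕜] [AddCommGroup V] [Module 𝕜 V] [FiniteDimensional 𝕜 V] [Fintype ι]
    (hcard : finrank 𝕜 V < Fintype.card ι) {p : ι → V} {y : V}
    (hy : y ∈ convexHull 𝕜 (range p)) {f : Dual 𝕜 V} (hf : f ≠ 0) (hle : ∀ i, f (p i) ≤ f y) :
    ∃ j, y ∈ convexHull 𝕜 (p '' {j}ᶜ) := by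
  obtain ⟨κ, _, z, w, hzp, hz, hw, hw₁, rfl⟩ := eq_pos_convex_span_of_mem_convexHull hy
  have hfz : ∀ a, f (z a) = f (∑ b, w b • z b) := by
    refine eq_of_forall_le_of_sum_mul_eq hw hw₁ (by simp [map_sum]) fun a => ?_
    obtain ⟨i, hi⟩ := hzp (mem_range_self a)
    exact hi ▸ hle i
  choose g hg using fun a => hzp (mem_range_self a)
  obtain ⟨j, hj⟩ : ∃ j, ∀ a, g a ≠ j := by
    by_contra! hsurj
    exact (hcard.trans_le (Fintype.card_le_of_surjective g hsurj)).not_ge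
      (hz.card_le_finrank_of_apply_eq hf hfz)
  refine ⟨j, (convex_convexHull 𝕜 _).sum_mem (fun a _ => (hw a).le) hw₁ fun a _ => ?_⟩
  exact subset_convexHull 𝕜 _ ⟨g a, hj a, hg a⟩

theorem exists_update_mem_convexHull_and_inner_sub_pos {F ι : Type*} [NormedAddCommGroup F]
    [InnerProductSpace ℝ F] [FiniteDimensional ℝ F] [Fintype ι] [DecidableEq ι]
    (hcard : finrank ℝ F < Fintype.card ι) {P : ι → Set F} {x y : F}
    (hx : ∀ i, x ∈ convexHull ℝ (P i)) (hxy : x ≠ y) {p : ι → F}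
    (hy : y ∈ convexHull ℝ (range p)) (hle : ∀ i, ⟪x - y, p i - y⟫ ≤ 0) :
    ∃ j, ∃ q ∈ P j, y ∈ convexHull ℝ (range (Function.update p j q)) ∧ 0 < ⟪x - y, q - y⟫ := by
  have hpos : 0 < ⟪x - y, x - y⟫ := real_inner_self_pos.2 (sub_ne_zero.2 hxy)
  obtain ⟨j, hj⟩ := exists_mem_convexHull_image_compl_of_le hcard hy
    (f := innerₛₗ ℝ (x - y)) (fun h => hpos.ne' (LinearMap.congr_fun h (x - y))) fun i => by
      rw [innerₛₗ_apply_apply, innerₛₗ_apply_apply, ← sub_nonpos, ← inner_sub_right]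
      exact hle i
  obtain ⟨q, hq, hxq⟩ := ((innerₛₗ ℝ (x - y)).convexOn convex_univ).exists_ge_of_mem_convexHull
    (subset_univ _) (hx j)
  refine ⟨j, q, hq, convexHull_mono ?_ hj, ?_⟩
  · rintro _ ⟨i, hi, rfl⟩
    exact ⟨i, Function.update_of_ne hi _ _⟩
  · simp only [innerₛₗ_apply_apply] at hxq
    rw [inner_sub_right] at hpos ⊢
    linarith

/-- **Bárány's Colorful Carathéodory theorem.** If `x` lies in the convex hull
of each of `d + 1` finite point sets `P₁, …, P_{d+1}` in `ℝ^d`, then one can choose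
one point `pᵢ ∈ Pᵢ` from each set so that `x ∈ conv {p₁, …, p_{d+1}}`. -/
theorem colorful_caratheodory (d : ℕ)
    (P : Fin (d + 1) → Finset (EuclideanSpace ℝ (Fin d)))
    (x : EuclideanSpace ℝ (Fin d))
    (hx : ∀ i, x ∈ convexHull ℝ (P i : Set (EuclideanSpace ℝ (Fin d)))) :
    ∃ p : Fin (d + 1) → EuclideanSpace ℝ (Fin d),
      (∀ i, p i ∈ P i) ∧ x ∈ convexHull ℝ (Set.range p) := by
  classical
  have hP : ∀ i, (P i).Nonempty := fun i =>
    Finset.coe_nonempty.1 (convexHull_nonempty_iff.1 ⟨x, hx i⟩)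
  obtain ⟨p, hpP, hpmin⟩ := (Fintype.piFinset P).exists_min_image
    (fun p => infDist x (convexHull ℝ (range p))) (Fintype.piFinset_nonempty.2 hP)
  obtain ⟨y, hyK, hdist⟩ := ((finite_range p).isCompact_convexHull ℝ).exists_infDist_eq_dist
    (range_nonempty p).convexHull x
  have hnearest : ∀ p' ∈ Fintype.piFinset P, y ∈ convexHull ℝ (range p') →
      ∀ w ∈ convexHull ℝ (range p'), ⟪x - y, w - y⟫ ≤ 0 := fun p' hp' hy' w hw =>
    real_inner_sub_sub_nonpos_of_forall_dist_le (convex_convexHull ℝ _) hy'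
      (fun z hz => hdist ▸ (hpmin p' hp').trans (infDist_le_dist_of_mem hz)) hw
  refine ⟨p, Fintype.mem_piFinset.1 hpP, ?_⟩
  by_contra hxK
  obtain ⟨j, q, hq, hy', hqpos⟩ := exists_update_mem_convexHull_and_inner_sub_pos (by simp) hx
    (fun h => hxK (h ▸ hyK)) hyK
    fun i => hnearest p hpP hyK _ (subset_convexHull ℝ _ (mem_range_self i))
  have hp' : Function.update p j q ∈ Fintype.piFinset P := Fintype.mem_piFinset.2 fun i => by
    rcases eq_or_ne i j with rfl | hi
    · simpa using hq
    · simpa [hi] using Fintype.mem_piFinset.1 hpP i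
  exact hqpos.not_ge (hnearest _ hp' hy' q (subset_convexHull ℝ _ ⟨j, Function.update_self _ _ _⟩))
end

section
/- Let X be a simplicial complex on a finite vertex set V with V ∉ X. Then for all −1 ≤ i ≤ |V|−2, the reduced homology groups satisfy H̃_i(X^⋆; ℚ) ≅ H̃_{|V|−i−3}(X; ℚ). -/
/-- An abstract simplicial complex on vertex type `V` (containing the empty face). -/
structure SimplicialCpx (V : Type*) where
  faces : Set (Finset V)
  down_closed : ∀ s ∈ faces, ∀ t ⊆ s, t ∈ faces
  empty_mem : (∅ : Finset V) ∈ faces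

namespace SimplicialCpx

variable {V : Type*}

/-- `n`-dimensional chains: formal ℚ-linear combinations of faces of cardinality `n`
(the degree is shifted by one from the usual convention: cardinality `n` faces
have topological dimension `n - 1`; cardinality `0` chains are spanned by the
empty face, giving *reduced* homology). -/
abbrev Chain (X : SimplicialCpx V) (n : ℕ) : Type _ :=
  {s : Finset V // s ∈ X.faces ∧ s.card = n} →₀ ℚ

variable [LinearOrder V]

/-- The simplicial boundary map, from chains on cardinality `n+1` faces to chains on
cardinality `n` faces, with signs determined by the linear order on the vertices. -/
noncomputable def bdry (X : SimplicialCpx V) (n : ℕ) :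
    X.Chain (n + 1) →ₗ[ℚ] X.Chain n :=
  Finsupp.lsum ℚ fun s => LinearMap.toSpanSingleton ℚ (X.Chain n)
    (∑ v ∈ s.1.attach, ((-1 : ℚ) ^ (s.1.filter (· < v.1)).card) •
      Finsupp.single ⟨s.1.erase v.1,
        ⟨X.down_closed _ s.2.1 _ (Finset.erase_subset _ _), by
          rw [Finset.card_erase_of_mem v.2, s.2.2]; rfl⟩⟩ (1 : ℚ))

/-- The cycles of cardinality `n`: all chains for `n = 0`, kernel of the boundary otherwise. -/
noncomputable def cycles (X : SimplicialCpx V) : (n : ℕ) → Submodule ℚ (X.Chain n)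
  | 0 => ⊤
  | (m + 1) => LinearMap.ker (X.bdry m)

/-- Reduced simplicial homology with rational coefficients, indexed so that
`X.redH n` is the reduced homology group `H̃_{n-1}(X; ℚ)` in the usual topological
indexing (thus `X.redH 0 = H̃_{-1}`). -/
noncomputable def redH (X : SimplicialCpx V) (n : ℕ) : Type _ :=
  (X.cycles n) ⧸ (Submodule.comap (X.cycles n).subtype (LinearMap.range (X.bdry n)))

noncomputable instance (X : SimplicialCpx V) (n : ℕ) : AddCommGroup (X.redH n) :=
  inferInstanceAs (AddCommGroup ((X.cycles n) ⧸ _))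

noncomputable instance (X : SimplicialCpx V) (n : ℕ) : Module ℚ (X.redH n) :=
  inferInstanceAs (Module ℚ ((X.cycles n) ⧸ _))

/-- `η(X) = min { j : H̃_j(X;ℚ) ≠ 0 } + 1`, which in our shifted indexing is
`min { n : X.redH n ≠ 0 }`; it is `⊤` if all reduced homology vanishes. -/
noncomputable def eta (X : SimplicialCpx V) : ℕ∞ :=
  sInf {n : ℕ∞ | ∃ m : ℕ, n = (m : ℕ∞) ∧ Nontrivial (X.redH m)}

/-- The induced subcomplex on a vertex subset `S`. -/
def induce (X : SimplicialCpx V) (S : Set V) : SimplicialCpx V where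
  faces := {t | t ∈ X.faces ∧ ↑t ⊆ S}
  down_closed := fun s hs t hts =>
    ⟨X.down_closed s hs.1 t hts, subset_trans (by exact_mod_cast hts) hs.2⟩
  empty_mem := ⟨X.empty_mem, by simp⟩

/-- The link of a face `T` in `X`. -/
def link (X : SimplicialCpx V) (T : Finset V) (hT : T ∈ X.faces) : SimplicialCpx V where
  faces := {R | Disjoint R T ∧ R ∪ T ∈ X.faces}
  down_closed := fun s hs t hts =>
    ⟨Finset.disjoint_of_subset_left hts hs.1,
     X.down_closed _ hs.2 _ (Finset.union_subset_union_left hts)⟩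
  empty_mem := ⟨Finset.disjoint_empty_left T, by simpa using hT⟩

/-- The Alexander dual `X^⋆ = { T ⊆ V : V - T ∉ X }` (a simplicial complex provided
the full vertex set is not a face of `X`). -/
def dual [Fintype V] [DecidableEq V] (X : SimplicialCpx V)
    (h : (Finset.univ : Finset V) ∉ X.faces) : SimplicialCpx V where
  faces := {T | Finset.univ \ T ∉ X.faces}
  down_closed := fun s hs t hts hmem =>
    hs (X.down_closed _ hmem _ (Finset.sdiff_subset_sdiff (subset_refl _) hts))
  empty_mem := by simpa using h

end SimplicialCpx

/-!
The chain complex of the full simplex `Δ` on `V` is acyclic: coning off the least vertex is a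
contracting homotopy. Hence in the long exact sequence of the pair `(Δ, X)` the connecting map
identifies `H̃_m(X)` with `H_{m+1}(Δ, X)`, the homology of the complex `C(Δ)/C(X)` spanned by the
non-faces of `X`. Sending a face `T` of `X^⋆` to the non-face `V \ T`, with suitable signs,
identifies the chain complex of `X^⋆` with the cochain complex of `C(Δ)/C(X)`; since a matrix and
its transpose have the same rank, homology and cohomology of this complex have the same dimension.
All groups are finite-dimensional ℚ-vector spaces, so the argument only compares dimensions.
-/

theorem Finsupp.lhom_ext_single_one {R α M : Type*} [Semiring R] [AddCommMonoid M] [Module R M]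
    {φ ψ : (α →₀ R) →ₗ[R] M} (h : ∀ a, φ (Finsupp.single a 1) = ψ (Finsupp.single a 1)) :
    φ = ψ :=
  Finsupp.lhom_ext' fun a => LinearMap.ext_ring (h a)

theorem Submodule.finrank_map_add_finrank_inf_ker {K M N : Type*} [DivisionRing K]
    [AddCommGroup M] [Module K M] [AddCommGroup N] [Module K N] [FiniteDimensional K M]
    (f : M →ₗ[K] N) (p : Submodule K M) :
    Module.finrank K (p.map f) + Module.finrank K ↥(p ⊓ LinearMap.ker f) = Module.finrank K p := by
  have h := LinearMap.finrank_range_add_finrank_ker (f ∘ₗ p.subtype)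
  rw [LinearMap.range_comp, Submodule.range_subtype, LinearMap.ker_comp,
    ← Submodule.finrank_map_subtype_eq, Submodule.map_comap_subtype] at h
  exact h

theorem LinearMap.finrank_range_eq_of_single_one_apply_comm {K α β : Type*} [Field K]
    [Finite α] [Finite β] {f : (α →₀ K) →ₗ[K] β →₀ K} {g : (β →₀ K) →ₗ[K] α →₀ K}
    (h : ∀ a b, g (Finsupp.single b 1) a = f (Finsupp.single a 1) b) :
    Module.finrank K (LinearMap.range f) = Module.finrank K (LinearMap.range g) := by
  classical
  have := Fintype.ofFinite α
  have := Fintype.ofFinite β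
  have htranspose : LinearMap.toMatrix Finsupp.basisSingleOne Finsupp.basisSingleOne g =
      (LinearMap.toMatrix Finsupp.basisSingleOne Finsupp.basisSingleOne f).transpose := by
    ext a b
    simp [LinearMap.toMatrix_apply, h]
  rw [← Matrix.toLin_toMatrix Finsupp.basisSingleOne Finsupp.basisSingleOne f,
    ← Matrix.toLin_toMatrix Finsupp.basisSingleOne Finsupp.basisSingleOne g,
    ← Matrix.rank_eq_finrank_range_toLin, ← Matrix.rank_eq_finrank_range_toLin, htranspose,
    Matrix.rank_transpose]

namespace SimplicialCpx

section Chains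

variable {V : Type*}

open scoped Classical in
noncomputable def faceChain (X : SimplicialCpx V) (n : ℕ) (s : Finset V) : X.Chain n :=
  if h : s ∈ X.faces ∧ s.card = n then Finsupp.single ⟨s, h⟩ 1 else 0

section FaceChain

variable (X : SimplicialCpx V) {n : ℕ} {s : Finset V}

lemma faceChain_of_mem (hs : s ∈ X.faces) (hn : s.card = n) :
    X.faceChain n s = Finsupp.single ⟨s, hs, hn⟩ 1 :=
  dif_pos ⟨hs, hn⟩

lemma faceChain_of_notMem (hs : s ∉ X.faces) : X.faceChain n s = 0 :=
  dif_neg fun h => hs h.1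

lemma faceChain_of_card_ne (hn : s.card ≠ n) : X.faceChain n s = 0 :=
  dif_neg fun h => hn h.2

end FaceChain

variable [LinearOrder V]

def faceSign (s : Finset V) (v : V) : ℚ := (-1) ^ (s.filter (· < v)).card

lemma faceSign_mul_self (s : Finset V) (v : V) : faceSign s v * faceSign s v = 1 := by
  rw [faceSign, ← mul_pow]; norm_num

lemma faceSign_mul_faceSign_erase_of_lt {s : Finset V} {v w : V} (hw : w ∈ s) (hwv : w < v) :
    faceSign s v * faceSign (s.erase v) w = -(faceSign s w * faceSign (s.erase w) v) := by
  have hw_filter : (s.erase v).filter (· < w) = s.filter (· < w) := by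
    rw [Finset.filter_erase, Finset.erase_eq_of_notMem]
    simp only [Finset.mem_filter, not_and, not_lt]
    exact fun _ => hwv.le
  have hv_filter : ((s.erase w).filter (· < v)).card + 1 = (s.filter (· < v)).card := by
    rw [Finset.filter_erase]
    exact Finset.card_erase_add_one (Finset.mem_filter.2 ⟨hw, hwv⟩)
  rw [faceSign, faceSign, faceSign, faceSign, hw_filter, ← hv_filter, pow_succ]
  ring

lemma faceSign_mul_faceSign_erase_antisymm {s : Finset V} {v w : V} (hv : v ∈ s) (hw : w ∈ s)
    (hne : v ≠ w) :
    faceSign s v * faceSign (s.erase v) w = -(faceSign s w * faceSign (s.erase w) v) := by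
  rcases hne.lt_or_gt with h | h
  · rw [faceSign_mul_faceSign_erase_of_lt hv h, neg_neg]
  · exact faceSign_mul_faceSign_erase_of_lt hw h

section Boundary

variable (X : SimplicialCpx V) {n : ℕ} {s : Finset V}

lemma bdry_single_one (σ : {s : Finset V // s ∈ X.faces ∧ s.card = n + 1}) :
    X.bdry n (Finsupp.single σ 1) = ∑ v ∈ σ.1, faceSign σ.1 v • X.faceChain n (σ.1.erase v) := by
  rw [bdry, Finsupp.lsum_single, LinearMap.toSpanSingleton_apply_one,
    ← Finset.sum_attach σ.1]
  refine Finset.sum_congr rfl fun v _ => ?_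
  rw [X.faceChain_of_mem (X.down_closed _ σ.2.1 _ (Finset.erase_subset _ _))
    (by rw [Finset.card_erase_of_mem v.2, σ.2.2]; rfl)]
  rfl

lemma bdry_faceChain (hs : s ∈ X.faces) :
    X.bdry n (X.faceChain (n + 1) s) = ∑ v ∈ s, faceSign s v • X.faceChain n (s.erase v) := by
  by_cases hn : s.card = n + 1
  · rw [X.faceChain_of_mem hs hn, bdry_single_one]
  · rw [X.faceChain_of_card_ne hn, map_zero]
    refine (Finset.sum_eq_zero fun v hv => ?_).symm
    rw [X.faceChain_of_card_ne, smul_zero]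
    have := Finset.card_erase_add_one hv
    omega

lemma bdry_bdry_single_one (σ : {s : Finset V // s ∈ X.faces ∧ s.card = n + 2}) :
    X.bdry n (X.bdry (n + 1) (Finsupp.single σ 1)) = 0 := by
  set s := σ.1
  have hterm : ∀ v ∈ s, X.bdry n (faceSign s v • X.faceChain (n + 1) (s.erase v)) =
      ∑ w ∈ s, if w ≠ v then
        (faceSign s v * faceSign (s.erase v) w) • X.faceChain n ((s.erase v).erase w) else 0 := by
    intro v _
    rw [map_smul, X.bdry_faceChain (X.down_closed _ σ.2.1 _ (Finset.erase_subset _ _)),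
      Finset.smul_sum, ← Finset.filter_ne' s v, Finset.sum_filter]
    simp only [smul_smul]
  rw [bdry_single_one, map_sum, Finset.sum_congr rfl hterm, ← Finset.sum_product']
  -- the terms for `(v, w)` and `(w, v)` cancel
  refine Finset.sum_involution (fun p _ => p.swap) (fun ⟨v, w⟩ hp => ?_)
    (fun ⟨v, w⟩ _ hne => ?_) (fun ⟨v, w⟩ hp => ?_) (fun _ _ => rfl)
  · rw [Finset.mem_product] at hp
    by_cases hwv : w = v
    · subst hwv; simp
    · rw [Prod.swap_prod_mk, if_pos hwv, if_pos (Ne.symm hwv), Finset.erase_right_comm,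
        ← add_smul, faceSign_mul_faceSign_erase_antisymm hp.1 hp.2 (Ne.symm hwv),
        neg_add_cancel, zero_smul]
  · intro hswap
    exact hne (if_neg (not_not.2 (Prod.ext_iff.1 hswap).1))
  · simpa [and_comm] using hp

lemma bdry_comp_bdry (n : ℕ) : (X.bdry n).comp (X.bdry (n + 1)) = 0 :=
  Finsupp.lhom_ext_single_one X.bdry_bdry_single_one

lemma range_bdry_le_cycles (n : ℕ) : LinearMap.range (X.bdry n) ≤ X.cycles n := by
  cases n with
  | zero => exact le_top
  | succ n =>
    rintro _ ⟨c, rfl⟩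
    exact LinearMap.congr_fun (X.bdry_comp_bdry n) c

end Boundary

end Chains

section Simplex

variable {V : Type*}

def simplex (V : Type*) : SimplicialCpx V :=
  ⟨Set.univ, fun _ _ _ _ => trivial, trivial⟩

@[simp]
lemma mem_simplex_faces (s : Finset V) : s ∈ (simplex V).faces := trivial

lemma simplex_single_one_eq_faceChain (n : ℕ)
    (σ : {s : Finset V // s ∈ (simplex V).faces ∧ s.card = n}) :
    Finsupp.single σ 1 = (simplex V).faceChain n σ.1 :=
  ((simplex V).faceChain_of_mem σ.2.1 σ.2.2).symm

variable [LinearOrder V] {v₀ : V}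

lemma faceSign_of_isBot (hv₀ : IsBot v₀) (s : Finset V) : faceSign s v₀ = 1 := by
  rw [faceSign, Finset.filter_eq_empty_iff.2 fun u _ => not_lt.2 (hv₀ u), Finset.card_empty,
    pow_zero]

lemma faceSign_insert_of_isBot (hv₀ : IsBot v₀) {s : Finset V} {v : V} (hv : v ∈ s)
    (hv₀s : v₀ ∉ s) : faceSign (insert v₀ s) v = -faceSign s v := by
  have hlt : v₀ < v := (hv₀ v).lt_of_ne fun h => hv₀s (h ▸ hv)
  rw [faceSign, faceSign, Finset.filter_insert, if_pos hlt,
    Finset.card_insert_of_notMem fun h => hv₀s (Finset.mem_filter.1 h).1, pow_succ, mul_neg_one]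

open scoped Classical in
noncomputable def cone (v₀ : V) (n : ℕ) : (simplex V).Chain n →ₗ[ℚ] (simplex V).Chain (n + 1) :=
  Finsupp.lsum ℚ fun σ => LinearMap.toSpanSingleton ℚ _
    (if v₀ ∈ σ.1 then 0 else (simplex V).faceChain (n + 1) (insert v₀ σ.1))

lemma cone_faceChain (v₀ : V) (n : ℕ) (s : Finset V) :
    cone v₀ n ((simplex V).faceChain n s) =
      if v₀ ∈ s then 0 else (simplex V).faceChain (n + 1) (insert v₀ s) := by
  by_cases hn : s.card = n
  · rw [(simplex V).faceChain_of_mem (mem_simplex_faces s) hn, cone, Finsupp.lsum_single,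
      LinearMap.toSpanSingleton_apply_one]
  · rw [(simplex V).faceChain_of_card_ne hn, map_zero]
    split_ifs with hv₀s
    · rfl
    · rw [(simplex V).faceChain_of_card_ne (by rw [Finset.card_insert_of_notMem hv₀s]; omega)]

lemma bdry_cone_add_cone_bdry (hv₀ : IsBot v₀) (n : ℕ) :
    (simplex V).bdry (n + 1) ∘ₗ cone v₀ (n + 1) + cone v₀ n ∘ₗ (simplex V).bdry n =
      LinearMap.id := by
  refine Finsupp.lhom_ext_single_one fun σ => ?_
  rw [LinearMap.add_apply, LinearMap.comp_apply, LinearMap.comp_apply, bdry_single_one,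
    LinearMap.id_apply, simplex_single_one_eq_faceChain, cone_faceChain, map_sum]
  simp only [map_smul, cone_faceChain]
  set s := σ.1
  by_cases hv₀s : v₀ ∈ s
  · -- every face of `s` except `s.erase v₀` contains `v₀`, so the cone kills it
    rw [if_pos hv₀s, map_zero, zero_add, Finset.sum_eq_single_of_mem v₀ hv₀s
      fun v _ hv => by rw [if_pos (Finset.mem_erase.2 ⟨Ne.symm hv, hv₀s⟩), smul_zero],
      if_neg (Finset.notMem_erase v₀ s), Finset.insert_erase hv₀s, faceSign_of_isBot hv₀,
      one_smul]
  · rw [if_neg hv₀s, bdry_faceChain _ (mem_simplex_faces _), Finset.sum_insert hv₀s,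
      Finset.erase_insert hv₀s, faceSign_of_isBot hv₀, one_smul]
    have hcancel : ∀ v ∈ s, faceSign (insert v₀ s) v •
        (simplex V).faceChain (n + 1) ((insert v₀ s).erase v) =
        -(faceSign s v • if v₀ ∈ s.erase v then 0
          else (simplex V).faceChain (n + 1) (insert v₀ (s.erase v))) := fun v hv => by
      rw [if_neg fun h => hv₀s (Finset.mem_of_mem_erase h),
        Finset.erase_insert_of_ne (by rintro rfl; exact hv₀s hv),
        faceSign_insert_of_isBot hv₀ hv hv₀s, neg_smul]
    rw [Finset.sum_congr rfl hcancel, Finset.sum_neg_distrib, neg_add_cancel_right]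

lemma bdry_zero_comp_cone (hv₀ : IsBot v₀) : (simplex V).bdry 0 ∘ₗ cone v₀ 0 = LinearMap.id := by
  refine Finsupp.lhom_ext_single_one fun σ => ?_
  have hσ : σ.1 = ∅ := Finset.card_eq_zero.1 σ.2.2
  rw [LinearMap.comp_apply, LinearMap.id_apply, simplex_single_one_eq_faceChain, cone_faceChain, hσ,
    if_neg (Finset.notMem_empty v₀), Finset.insert_empty,
    bdry_faceChain _ (mem_simplex_faces _), Finset.sum_singleton, Finset.erase_singleton,
    faceSign_of_isBot hv₀, one_smul]

variable [Finite V] [Nonempty V]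

lemma ker_simplex_bdry (n : ℕ) :
    LinearMap.ker ((simplex V).bdry n) = LinearMap.range ((simplex V).bdry (n + 1)) := by
  obtain ⟨v₀, hv₀⟩ := Finite.exists_min (id : V → V)
  refine le_antisymm (fun c hc => ⟨cone v₀ (n + 1) c, ?_⟩) (LinearMap.range_le_ker_iff.2
    ((simplex V).bdry_comp_bdry n))
  simpa [LinearMap.mem_ker.1 hc] using LinearMap.congr_fun (bdry_cone_add_cone_bdry hv₀ n) c

lemma range_simplex_bdry_zero : LinearMap.range ((simplex V).bdry 0) = ⊤ := by
  obtain ⟨v₀, hv₀⟩ := Finite.exists_min (id : V → V)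
  exact LinearMap.range_eq_top.2 fun c =>
    ⟨cone v₀ 0 c, LinearMap.congr_fun (bdry_zero_comp_cone hv₀) c⟩

end Simplex

section NonfaceChains

variable {V : Type*}

/-- Chains of the relative complex `C(Δ) / C(X)`, spanned by the non-faces of `X`. -/
abbrev NonfaceChain (X : SimplicialCpx V) (n : ℕ) : Type _ :=
  {s : Finset V // s ∉ X.faces ∧ s.card = n} →₀ ℚ

open scoped Classical in
noncomputable def nonfaceChain (X : SimplicialCpx V) (n : ℕ) (s : Finset V) : X.NonfaceChain n :=
  if h : s ∉ X.faces ∧ s.card = n then Finsupp.single ⟨s, h⟩ 1 else 0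

section

variable (X : SimplicialCpx V) (n : ℕ) {s : Finset V}

lemma nonfaceChain_of_notMem (hs : s ∉ X.faces) (hn : s.card = n) :
    X.nonfaceChain n s = Finsupp.single ⟨s, hs, hn⟩ 1 :=
  dif_pos ⟨hs, hn⟩

lemma nonfaceChain_of_mem (hs : s ∈ X.faces) : X.nonfaceChain n s = 0 :=
  dif_neg fun h => h.1 hs

lemma nonfaceChain_of_card_ne (hn : s.card ≠ n) : X.nonfaceChain n s = 0 :=
  dif_neg fun h => hn h.2

lemma nonfaceChain_apply [DecidableEq V] (σ : {s : Finset V // s ∉ X.faces ∧ s.card = n})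
    (t : Finset V) :
    X.nonfaceChain n t σ = if t = σ.1 then 1 else 0 := by
  split_ifs with ht
  · subst ht
    rw [X.nonfaceChain_of_notMem n σ.2.1 σ.2.2, Finsupp.single_eq_same]
  · by_cases hmem : t ∈ X.faces
    · rw [X.nonfaceChain_of_mem n hmem, Finsupp.zero_apply]
    by_cases hn : t.card = n
    · rw [X.nonfaceChain_of_notMem n hmem hn,
        Finsupp.single_eq_of_ne fun h => ht (congrArg Subtype.val h).symm]
    · rw [X.nonfaceChain_of_card_ne n hn, Finsupp.zero_apply]

noncomputable def incl : X.Chain n →ₗ[ℚ] (simplex V).Chain n :=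
  Finsupp.lmapDomain ℚ ℚ fun σ => ⟨σ.1, mem_simplex_faces _, σ.2.2⟩

noncomputable def restrict : (simplex V).Chain n →ₗ[ℚ] X.Chain n :=
  Finsupp.lsum ℚ fun σ => LinearMap.toSpanSingleton ℚ _ (X.faceChain n σ.1)

noncomputable def nonfaceIncl : X.NonfaceChain n →ₗ[ℚ] (simplex V).Chain n :=
  Finsupp.lmapDomain ℚ ℚ fun σ => ⟨σ.1, mem_simplex_faces _, σ.2.2⟩

noncomputable def proj : (simplex V).Chain n →ₗ[ℚ] X.NonfaceChain n :=
  Finsupp.lsum ℚ fun σ => LinearMap.toSpanSingleton ℚ _ (X.nonfaceChain n σ.1)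

variable {n}

lemma incl_faceChain (hs : s ∈ X.faces) :
    X.incl n (X.faceChain n s) = (simplex V).faceChain n s := by
  by_cases hn : s.card = n
  · rw [X.faceChain_of_mem hs hn, incl, Finsupp.lmapDomain_apply, Finsupp.mapDomain_single,
      simplex_single_one_eq_faceChain]
  · rw [X.faceChain_of_card_ne hn, (simplex V).faceChain_of_card_ne hn, map_zero]

lemma restrict_faceChain (s : Finset V) :
    X.restrict n ((simplex V).faceChain n s) = X.faceChain n s := by
  by_cases hn : s.card = n
  · rw [(simplex V).faceChain_of_mem (mem_simplex_faces s) hn, restrict, Finsupp.lsum_single,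
      LinearMap.toSpanSingleton_apply_one]
  · rw [(simplex V).faceChain_of_card_ne hn, X.faceChain_of_card_ne hn, map_zero]

lemma nonfaceIncl_nonfaceChain (hs : s ∉ X.faces) :
    X.nonfaceIncl n (X.nonfaceChain n s) = (simplex V).faceChain n s := by
  by_cases hn : s.card = n
  · rw [X.nonfaceChain_of_notMem n hs hn, nonfaceIncl, Finsupp.lmapDomain_apply,
      Finsupp.mapDomain_single, simplex_single_one_eq_faceChain]
  · rw [X.nonfaceChain_of_card_ne n hn, (simplex V).faceChain_of_card_ne hn, map_zero]

lemma proj_faceChain (s : Finset V) :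
    X.proj n ((simplex V).faceChain n s) = X.nonfaceChain n s := by
  by_cases hn : s.card = n
  · rw [(simplex V).faceChain_of_mem (mem_simplex_faces s) hn, proj, Finsupp.lsum_single,
      LinearMap.toSpanSingleton_apply_one]
  · rw [(simplex V).faceChain_of_card_ne hn, X.nonfaceChain_of_card_ne n hn, map_zero]

lemma incl_comp_restrict_add_nonfaceIncl_comp_proj :
    X.incl n ∘ₗ X.restrict n + X.nonfaceIncl n ∘ₗ X.proj n = LinearMap.id := by
  refine Finsupp.lhom_ext_single_one fun σ => ?_
  rw [LinearMap.add_apply, LinearMap.comp_apply, LinearMap.comp_apply, LinearMap.id_apply,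
    simplex_single_one_eq_faceChain, restrict_faceChain, proj_faceChain]
  by_cases hs : σ.1 ∈ X.faces
  · rw [X.incl_faceChain hs, X.nonfaceChain_of_mem n hs, map_zero, add_zero]
  · rw [X.faceChain_of_notMem hs, X.nonfaceIncl_nonfaceChain hs, map_zero, zero_add]

lemma proj_comp_incl : X.proj n ∘ₗ X.incl n = 0 := by
  refine Finsupp.lhom_ext_single_one fun σ => ?_
  rw [LinearMap.comp_apply, ← X.faceChain_of_mem σ.2.1 σ.2.2, X.incl_faceChain σ.2.1,
    proj_faceChain, X.nonfaceChain_of_mem n σ.2.1, LinearMap.zero_apply]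

lemma proj_comp_nonfaceIncl : X.proj n ∘ₗ X.nonfaceIncl n = LinearMap.id := by
  refine Finsupp.lhom_ext_single_one fun σ => ?_
  rw [LinearMap.comp_apply, ← X.nonfaceChain_of_notMem n σ.2.1 σ.2.2,
    X.nonfaceIncl_nonfaceChain σ.2.1, proj_faceChain, LinearMap.id_apply]

lemma ker_proj : LinearMap.ker (X.proj n) = LinearMap.range (X.incl n) := by
  refine le_antisymm (fun c hc => ⟨X.restrict n c, ?_⟩)
    (LinearMap.range_le_ker_iff.2 X.proj_comp_incl)
  simpa [LinearMap.mem_ker.1 hc] using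
    LinearMap.congr_fun X.incl_comp_restrict_add_nonfaceIncl_comp_proj c

lemma range_proj : LinearMap.range (X.proj n) = ⊤ :=
  LinearMap.range_eq_top.2 fun c =>
    ⟨X.nonfaceIncl n c, LinearMap.congr_fun X.proj_comp_nonfaceIncl c⟩

lemma incl_injective : Function.Injective (X.incl n) :=
  Finsupp.mapDomain_injective fun _ _ h => Subtype.ext (congrArg Subtype.val h :)

variable [LinearOrder V]

variable (n) in
noncomputable def relBdry : X.NonfaceChain (n + 1) →ₗ[ℚ] X.NonfaceChain n :=
  Finsupp.lsum ℚ fun σ => LinearMap.toSpanSingleton ℚ _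
    (∑ v ∈ σ.1, faceSign σ.1 v • X.nonfaceChain n (σ.1.erase v))

lemma relBdry_single_one (σ : {s : Finset V // s ∉ X.faces ∧ s.card = n + 1}) :
    X.relBdry n (Finsupp.single σ 1) =
      ∑ v ∈ σ.1, faceSign σ.1 v • X.nonfaceChain n (σ.1.erase v) := by
  rw [relBdry, Finsupp.lsum_single, LinearMap.toSpanSingleton_apply_one]

lemma bdry_comp_incl : (simplex V).bdry n ∘ₗ X.incl (n + 1) = X.incl n ∘ₗ X.bdry n := by
  refine Finsupp.lhom_ext_single_one fun σ => ?_
  rw [LinearMap.comp_apply, LinearMap.comp_apply, bdry_single_one, map_sum,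
    ← X.faceChain_of_mem σ.2.1 σ.2.2, X.incl_faceChain σ.2.1,
    bdry_faceChain _ (mem_simplex_faces _)]
  refine Finset.sum_congr rfl fun v _ => ?_
  rw [map_smul, X.incl_faceChain (X.down_closed _ σ.2.1 _ (Finset.erase_subset _ _))]

lemma proj_comp_bdry : X.proj n ∘ₗ (simplex V).bdry n = X.relBdry n ∘ₗ X.proj (n + 1) := by
  refine Finsupp.lhom_ext_single_one fun σ => ?_
  rw [LinearMap.comp_apply, LinearMap.comp_apply, bdry_single_one, map_sum,
    simplex_single_one_eq_faceChain, proj_faceChain]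
  simp only [map_smul, proj_faceChain]
  by_cases hs : σ.1 ∈ X.faces
  · rw [X.nonfaceChain_of_mem _ hs, map_zero]
    refine Finset.sum_eq_zero fun v _ => ?_
    rw [X.nonfaceChain_of_mem _ (X.down_closed _ hs _ (Finset.erase_subset _ _)), smul_zero]
  · rw [X.nonfaceChain_of_notMem _ hs σ.2.2, relBdry_single_one]

end

end NonfaceChains

section Dimension

open Module

variable {V : Type*} [Finite V] (X : SimplicialCpx V)

lemma finrank_chain_add_finrank_nonfaceChain (n : ℕ) :
    finrank ℚ (X.Chain n) + finrank ℚ (X.NonfaceChain n) = finrank ℚ ((simplex V).Chain n) := by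
  have h := LinearMap.finrank_range_add_finrank_ker (X.proj n)
  rw [X.range_proj, X.ker_proj, finrank_top, LinearMap.finrank_range_of_inj X.incl_injective] at h
  omega

variable [LinearOrder V]

instance (n : ℕ) : Module.Finite ℚ (X.redH n) :=
  Module.Finite.quotient ℚ (Submodule.comap (X.cycles n).subtype (LinearMap.range (X.bdry n)))

lemma finrank_redH_add_finrank_range_bdry (n : ℕ) :
    finrank ℚ (X.redH n) + finrank ℚ (LinearMap.range (X.bdry n)) = finrank ℚ (X.cycles n) := by
  rw [← (Submodule.comapSubtypeEquivOfLe (X.range_bdry_le_cycles n)).finrank_eq]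
  exact Submodule.finrank_quotient_add_finrank _

lemma finrank_cycles_succ_add_finrank_range_bdry (n : ℕ) :
    finrank ℚ (X.cycles (n + 1)) + finrank ℚ (LinearMap.range (X.bdry n)) =
      finrank ℚ (X.Chain (n + 1)) := by
  rw [add_comm]
  exact LinearMap.finrank_range_add_finrank_ker (X.bdry n)

variable [Nonempty V]

lemma finrank_range_simplex_bdry_add (n : ℕ) :
    finrank ℚ (LinearMap.range ((simplex V).bdry n)) +
      finrank ℚ (LinearMap.range ((simplex V).bdry (n + 1))) =
      finrank ℚ ((simplex V).Chain (n + 1)) := by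
  rw [← ker_simplex_bdry]
  exact LinearMap.finrank_range_add_finrank_ker _

lemma range_simplex_bdry_inf_range_incl (n : ℕ) :
    LinearMap.range ((simplex V).bdry n) ⊓ LinearMap.range (X.incl n) =
      (X.cycles n).map (X.incl n) := by
  cases n with
  | zero =>
    rw [range_simplex_bdry_zero, top_inf_eq, cycles, Submodule.map_top]
  | succ n =>
    rw [← ker_simplex_bdry, cycles]
    ext c
    constructor
    · rintro ⟨hc, x, rfl⟩
      refine ⟨x, X.incl_injective ?_, rfl⟩
      rw [← LinearMap.comp_apply, ← bdry_comp_incl, LinearMap.comp_apply, LinearMap.mem_ker.1 hc,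
        map_zero]
    · rintro ⟨x, hx, rfl⟩
      refine ⟨LinearMap.mem_ker.2 ?_, x, rfl⟩
      rw [← LinearMap.comp_apply, bdry_comp_incl, LinearMap.comp_apply,
        LinearMap.mem_ker.1 hx, map_zero]

lemma finrank_range_relBdry_add_finrank_cycles (n : ℕ) :
    finrank ℚ (LinearMap.range (X.relBdry n)) + finrank ℚ (X.cycles n) =
      finrank ℚ (LinearMap.range ((simplex V).bdry n)) := by
  have hrange : LinearMap.range (X.relBdry n) =
      (LinearMap.range ((simplex V).bdry n)).map (X.proj n) := by
    rw [← LinearMap.range_comp_of_range_eq_top (X.relBdry n) X.range_proj, ← proj_comp_bdry,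
      LinearMap.range_comp]
  have hcycles := (Submodule.equivMapOfInjective _ X.incl_injective (X.cycles n)).finrank_eq
  rw [hrange, hcycles, ← X.range_simplex_bdry_inf_range_incl, ← X.ker_proj]
  exact Submodule.finrank_map_add_finrank_inf_ker _ _

/-- `dim H̃_m(X) = dim H_{m+1}(Δ, X)`: the connecting map of the pair `(Δ, X)`, in dimensions. -/
theorem finrank_redH_add_finrank_range_relBdry (m : ℕ) :
    finrank ℚ (X.redH m) + finrank ℚ (LinearMap.range (X.relBdry (m + 1))) +
      finrank ℚ (LinearMap.range (X.relBdry m)) = finrank ℚ (X.NonfaceChain (m + 1)) := by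
  have := X.finrank_redH_add_finrank_range_bdry m
  have := X.finrank_cycles_succ_add_finrank_range_bdry m
  have := X.finrank_range_relBdry_add_finrank_cycles m
  have := X.finrank_range_relBdry_add_finrank_cycles (m + 1)
  have := finrank_range_simplex_bdry_add (V := V) m
  have := X.finrank_chain_add_finrank_nonfaceChain (m + 1)
  omega

end Dimension

section Complement

open Module Finset

variable {V : Type*} [LinearOrder V] [Fintype V]

def complSign (s : Finset V) : ℚ := ∏ w ∈ s, faceSign univ w

lemma complSign_mul_self (s : Finset V) : complSign s * complSign s = 1 := by
  rw [complSign, ← prod_mul_distrib]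
  exact prod_eq_one fun w _ => faceSign_mul_self _ _

lemma faceSign_mul_faceSign_insert_compl (T : Finset V) (v : V) :
    faceSign T v * faceSign (insert v (univ \ T)) v = faceSign univ v := by
  have hsplit : univ.filter (· < v) = T.filter (· < v) ∪ (univ \ T).filter (· < v) := by
    rw [← filter_union, union_sdiff_of_subset (subset_univ T)]
  rw [faceSign, faceSign, faceSign, filter_insert, if_neg (lt_irrefl v), ← pow_add, hsplit,
    card_union_of_disjoint (disjoint_filter_filter disjoint_sdiff)]

lemma faceSign_mul_complSign_erase {T : Finset V} {v : V} (hv : v ∈ T) :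
    faceSign T v * complSign (T.erase v) = complSign T * faceSign (insert v (univ \ T)) v := by
  rw [complSign, complSign, ← mul_prod_erase T _ hv, ← faceSign_mul_faceSign_insert_compl T v]
  linear_combination -(faceSign T v * ∏ w ∈ T.erase v, faceSign univ w) *
    faceSign_mul_self (insert v (univ \ T)) v

variable (X : SimplicialCpx V) (hX : univ ∉ X.faces)

lemma card_univ_sdiff_of_add_eq_card {t : Finset V} {k l : ℕ} (hkl : k + l = Fintype.card V)
    (ht : t.card = k) :
    (univ \ t).card = l := by
  rw [card_sdiff_of_subset (subset_univ t), card_univ]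
  omega

noncomputable def complChain (k l : ℕ) : (X.dual hX).Chain k →ₗ[ℚ] X.NonfaceChain l :=
  Finsupp.lsum ℚ fun T => LinearMap.toSpanSingleton ℚ _
    (complSign T.1 • X.nonfaceChain l (univ \ T.1))

noncomputable def complChainInv (l k : ℕ) : X.NonfaceChain l →ₗ[ℚ] (X.dual hX).Chain k :=
  Finsupp.lsum ℚ fun S => LinearMap.toSpanSingleton ℚ _
    (complSign (univ \ S.1) • (X.dual hX).faceChain k (univ \ S.1))

lemma complChain_faceChain {k l : ℕ} {T : Finset V} (hT : T ∈ (X.dual hX).faces)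
    (hk : T.card = k) :
    X.complChain hX k l ((X.dual hX).faceChain k T) =
      complSign T • X.nonfaceChain l (univ \ T) := by
  rw [(X.dual hX).faceChain_of_mem hT hk, complChain, Finsupp.lsum_single,
    LinearMap.toSpanSingleton_apply_one]

lemma complChainInv_nonfaceChain {l k : ℕ} {S : Finset V} (hS : S ∉ X.faces) (hl : S.card = l) :
    X.complChainInv hX l k (X.nonfaceChain l S) =
      complSign (univ \ S) • (X.dual hX).faceChain k (univ \ S) := by
  rw [X.nonfaceChain_of_notMem l hS hl, complChainInv, Finsupp.lsum_single,
    LinearMap.toSpanSingleton_apply_one]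

lemma complChain_comp_complChainInv {k l : ℕ} (hkl : k + l = Fintype.card V) :
    X.complChain hX k l ∘ₗ X.complChainInv hX l k = LinearMap.id := by
  refine Finsupp.lhom_ext_single_one fun S => ?_
  have hS : univ \ S.1 ∈ (X.dual hX).faces := by
    show univ \ (univ \ S.1) ∉ X.faces
    rw [Finset.sdiff_sdiff_eq_self (subset_univ S.1)]
    exact S.2.1
  rw [LinearMap.comp_apply, ← X.nonfaceChain_of_notMem l S.2.1 S.2.2,
    X.complChainInv_nonfaceChain hX S.2.1 S.2.2, map_smul,
    X.complChain_faceChain hX hS (card_univ_sdiff_of_add_eq_card (by omega) S.2.2), smul_smul,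
    complSign_mul_self, one_smul, Finset.sdiff_sdiff_eq_self (subset_univ S.1), LinearMap.id_apply]

lemma complChainInv_comp_complChain {k l : ℕ} (hkl : k + l = Fintype.card V) :
    X.complChainInv hX l k ∘ₗ X.complChain hX k l = LinearMap.id := by
  refine Finsupp.lhom_ext_single_one fun T => ?_
  rw [LinearMap.comp_apply, ← (X.dual hX).faceChain_of_mem T.2.1 T.2.2,
    X.complChain_faceChain hX T.2.1 T.2.2, map_smul,
    X.complChainInv_nonfaceChain hX T.2.1 (card_univ_sdiff_of_add_eq_card hkl T.2.2),
    Finset.sdiff_sdiff_eq_self (subset_univ T.1), smul_smul, complSign_mul_self, one_smul,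
    LinearMap.id_apply]

noncomputable def complChainEquiv {k l : ℕ} (hkl : k + l = Fintype.card V) :
    (X.dual hX).Chain k ≃ₗ[ℚ] X.NonfaceChain l :=
  LinearEquiv.ofLinearMap (X.complChain hX k l) (X.complChainInv hX l k)
    (X.complChain_comp_complChainInv hX hkl) (X.complChainInv_comp_complChain hX hkl)

noncomputable def relCobdry (l : ℕ) : X.NonfaceChain l →ₗ[ℚ] X.NonfaceChain (l + 1) :=
  Finsupp.lsum ℚ fun S => LinearMap.toSpanSingleton ℚ _
    (∑ v ∈ univ \ S.1, faceSign (insert v S.1) v • X.nonfaceChain (l + 1) (insert v S.1))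

lemma relCobdry_single_one {l : ℕ} (S : {s : Finset V // s ∉ X.faces ∧ s.card = l}) :
    X.relCobdry l (Finsupp.single S 1) =
      ∑ v ∈ univ \ S.1, faceSign (insert v S.1) v • X.nonfaceChain (l + 1) (insert v S.1) := by
  rw [relCobdry, Finsupp.lsum_single, LinearMap.toSpanSingleton_apply_one]

lemma relCobdry_single_one_apply {l : ℕ} (S : {s : Finset V // s ∉ X.faces ∧ s.card = l})
    (S' : {s : Finset V // s ∉ X.faces ∧ s.card = l + 1}) :
    X.relCobdry l (Finsupp.single S 1) S' = X.relBdry l (Finsupp.single S' 1) S := by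
  rw [relCobdry_single_one, relBdry_single_one, Finsupp.finsetSum_apply,
    Finsupp.finsetSum_apply]
  simp only [Finsupp.smul_apply, nonfaceChain_apply, smul_eq_mul, mul_ite, mul_one, mul_zero]
  rw [← Finset.sum_filter, ← Finset.sum_filter]
  have hindex : (univ \ S.1).filter (fun v => insert v S.1 = S'.1) =
      S'.1.filter (fun v => S'.1.erase v = S.1) := by
    ext v
    simp only [mem_filter, mem_sdiff, mem_univ, true_and]
    constructor
    · rintro ⟨hv, h⟩
      rw [← h]
      exact ⟨mem_insert_self v S.1, erase_insert hv⟩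
    · rintro ⟨hv, h⟩
      rw [← h]
      exact ⟨notMem_erase v S'.1, insert_erase hv⟩
  refine Finset.sum_congr hindex fun v hv => ?_
  obtain ⟨hv, h⟩ := mem_filter.1 hv
  rw [← h, insert_erase hv]

lemma complChain_comp_bdry {n l : ℕ} (hnl : n + 1 + l = Fintype.card V) :
    X.complChain hX n (l + 1) ∘ₗ (X.dual hX).bdry n =
      X.relCobdry l ∘ₗ X.complChain hX (n + 1) l := by
  refine Finsupp.lhom_ext_single_one fun T => ?_
  rw [LinearMap.comp_apply, LinearMap.comp_apply, bdry_single_one, map_sum,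
    ← (X.dual hX).faceChain_of_mem T.2.1 T.2.2, X.complChain_faceChain hX T.2.1 T.2.2,
    X.nonfaceChain_of_notMem _ T.2.1 (card_univ_sdiff_of_add_eq_card hnl T.2.2), map_smul,
    relCobdry_single_one, Finset.smul_sum, Finset.sdiff_sdiff_eq_self (subset_univ T.1)]
  refine Finset.sum_congr rfl fun v hv => ?_
  rw [map_smul, X.complChain_faceChain hX
      ((X.dual hX).down_closed _ T.2.1 _ (Finset.erase_subset _ _))
      (by rw [Finset.card_erase_of_mem hv, T.2.2]; rfl),
    Finset.sdiff_erase (Finset.mem_univ v), smul_smul, smul_smul, faceSign_mul_complSign_erase hv]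

end Complement

section Duality

open Module

variable {V : Type*} [LinearOrder V] [Fintype V] (X : SimplicialCpx V)

lemma finrank_range_relBdry_card :
    finrank ℚ (LinearMap.range (X.relBdry (Fintype.card V))) = 0 := by
  have : IsEmpty {s : Finset V // s ∉ X.faces ∧ s.card = Fintype.card V + 1} :=
    ⟨fun σ => by have := Finset.card_le_univ σ.1; omega⟩
  exact Nat.eq_zero_of_le_zero
    ((LinearMap.finrank_range_le _).trans_eq Module.finrank_zero_of_subsingleton)

variable (hX : Finset.univ ∉ X.faces)

lemma finrank_range_dual_bdry {n l : ℕ} (hnl : n + 1 + l = Fintype.card V) :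
    finrank ℚ (LinearMap.range ((X.dual hX).bdry n)) =
      finrank ℚ (LinearMap.range (X.relBdry l)) := by
  let e := X.complChainEquiv hX (k := n) (l := l + 1) (by omega)
  calc finrank ℚ (LinearMap.range ((X.dual hX).bdry n))
      = finrank ℚ ((LinearMap.range ((X.dual hX).bdry n)).map e.toLinearMap) :=
        (LinearEquiv.finrank_map_eq e _).symm
    _ = finrank ℚ (LinearMap.range (X.relCobdry l)) := by
        rw [← LinearMap.range_comp, show e.toLinearMap = X.complChain hX n (l + 1) from rfl,
          X.complChain_comp_bdry hX hnl,
          LinearMap.range_comp_of_range_eq_top (f := X.complChain hX (n + 1) l) _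
            (LinearMap.range_eq_top.2
            (X.complChainEquiv hX (k := n + 1) (l := l) (by omega)).surjective)]
    _ = finrank ℚ (LinearMap.range (X.relBdry l)) :=
        (LinearMap.finrank_range_eq_of_single_one_apply_comm fun S' S =>
          X.relCobdry_single_one_apply S S').symm

/-- `dim H̃_n(X^⋆) = dim H^{m+1}(Δ, X)`, and cohomology has the dimension of homology. -/
theorem finrank_redH_dual_add_finrank_range_relBdry {n m : ℕ}
    (hnm : n + m + 1 = Fintype.card V) :
    finrank ℚ ((X.dual hX).redH n) + finrank ℚ (LinearMap.range (X.relBdry (m + 1))) +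
      finrank ℚ (LinearMap.range (X.relBdry m)) = finrank ℚ (X.NonfaceChain (m + 1)) := by
  have := (X.dual hX).finrank_redH_add_finrank_range_bdry n
  have := X.finrank_range_dual_bdry hX (n := n) (l := m) (by omega)
  have := (X.complChainEquiv hX (k := n) (l := m + 1) (by omega)).finrank_eq
  cases n with
  | zero =>
    have : finrank ℚ (LinearMap.range (X.relBdry (m + 1))) = 0 := by
      rw [show m + 1 = Fintype.card V by omega]
      exact X.finrank_range_relBdry_card
    have : finrank ℚ ((X.dual hX).cycles 0) = finrank ℚ ((X.dual hX).Chain 0) := finrank_top ℚ _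
    omega
  | succ n =>
    have := (X.dual hX).finrank_cycles_succ_add_finrank_range_bdry n
    have := X.finrank_range_dual_bdry hX (n := n) (l := m + 1) (by omega)
    omega

end Duality

end SimplicialCpx

/-- **Combinatorial Alexander duality.** For a simplicial complex `X` on a finite
vertex set `V` with `V ∉ X`, one has `H̃ᵢ(X^⋆;ℚ) ≅ H̃_{|V|-i-3}(X;ℚ)` for all
`-1 ≤ i ≤ |V| - 2`.  (In our indexing, `redH n` is `H̃_{n-1}`, so the degrees
`i = n - 1` and `|V| - i - 3 = m - 1` correspond to indices with `n + m + 1 = |V|`.) -/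
theorem alexander_duality {V : Type*} [LinearOrder V] [Fintype V]
    (X : SimplicialCpx V) (h : (Finset.univ : Finset V) ∉ X.faces)
    (n m : ℕ) (hnm : n + m + 1 = Fintype.card V) :
    Nonempty ((X.dual h).redH n ≃ₗ[ℚ] X.redH m) := by
  have : Nonempty V := Fintype.card_pos_iff.1 (by omega)
  have hdual := X.finrank_redH_dual_add_finrank_range_relBdry h hnm
  have hprimal := X.finrank_redH_add_finrank_range_relBdry m
  exact ⟨LinearEquiv.ofFinrankEq _ _ (by omega)⟩
end

section
/- Let N be a matroid on ground set V with rank function ρ, and let Y be its independence complex. Then for every non-empty S ⊆ V, the induced subcomplex Y[S] satisfies η(Y[S]) ≥ ρ(S), i.e., H̃_j(Y[S]; ℚ) = 0 for all j < ρ(S) − 1. -/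
/-- A matroid on a finite ground set, given by its independent sets. -/
structure FinMatroid (V : Type*) [DecidableEq V] where
  Indep : Finset V → Prop
  empty_indep : Indep ∅
  indep_subset : ∀ ⦃s t : Finset V⦄, Indep s → t ⊆ s → Indep t
  indep_exchange : ∀ ⦃s t : Finset V⦄, Indep s → Indep t → s.card < t.card →
    ∃ x ∈ t, x ∉ s ∧ Indep (insert x s)

namespace FinMatroid

variable {V : Type*} [DecidableEq V]

/-- The rank function of a matroid: the maximal cardinality of an independent subset. -/
noncomputable def rk (N : FinMatroid V) (S : Finset V) : ℕ :=
  sSup {n | ∃ I : Finset V, I ⊆ S ∧ N.Indep I ∧ I.card = n}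

/-- The rank of a matroid on a finite ground set. -/
noncomputable def rank [Fintype V] (N : FinMatroid V) : ℕ := N.rk Finset.univ

/-- The independence complex of a matroid. -/
def indepComplex (N : FinMatroid V) : SimplicialCpx V where
  faces := {s | N.Indep s}
  down_closed := fun _ hs _ hts => N.indep_subset hs hts
  empty_mem := N.empty_indep

/-- The restriction of a matroid to a subset `S` of the ground set: independent sets
are the independent sets of `N` contained in `S`. -/
def restrict (N : FinMatroid V) (S : Finset V) : FinMatroid V where
  Indep := fun t => N.Indep t ∧ t ⊆ S
  empty_indep := ⟨N.empty_indep, Finset.empty_subset S⟩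
  indep_subset := fun s t hs hts => ⟨N.indep_subset hs.1 hts, hts.trans hs.2⟩
  indep_exchange := fun s t hs ht hcard => by
    obtain ⟨x, hxt, hxs, hx⟩ := N.indep_exchange hs.1 ht.1 hcard
    exact ⟨x, hxt, hxs, hx, Finset.insert_subset (ht.2 hxt) hs.2⟩

/-- A basis of a matroid on a finite ground set: a maximal independent set. -/
def IsBasis [Fintype V] (N : FinMatroid V) (B : Finset V) : Prop :=
  N.Indep B ∧ ∀ B', N.Indep B' → B ⊆ B' → B = B'

end FinMatroid

/-!
Induct on `S`. Let `z` be a cycle on the independent `n`-subsets of `S` with `n < ρ(S)`, and let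
`v` lie in a basis of `S`. If `v` can be added to every face of `z` that misses it, then
`z = ∂(cone v z)`. Otherwise some face `s₀ ∌ v` of `z` has `s₀ + v` dependent; then `n ≥ 1`, and
exchanging `s₀` against the basis gives `ρ(S - v) > n`. The link part `uncone v z` is a cycle of
the contraction `N / v` on `S - v`, so by induction it is `∂w`; then `z + ∂(cone v w)` avoids `v`,
so it is a cycle of `N` on `S - v` and equals some `∂u`, and `z = ∂(u - cone v w)`.
-/

open Finsupp Finset

section Supported

variable {R α M : Type*} [Semiring R] [AddCommMonoid M] [Module R M]

lemma Finsupp.map_mem_supported {β : Type*} {f : (α →₀ R) →ₗ[R] β →₀ R} {P : Set α} {Q : Set β}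
    (h : ∀ a ∈ P, f (single a 1) ∈ supported R R Q) {c : α →₀ R}
    (hc : c ∈ supported R R P) : f c ∈ supported R R Q := by
  rw [supported_eq_span_single] at hc
  refine (Submodule.span_le (p := (supported R R Q).comap f)).2 ?_ hc
  rintro _ ⟨a, ha, rfl⟩
  exact h a ha

lemma Finsupp.eqOn_supported {f g : (α →₀ R) →ₗ[R] M} {P : Set α}
    (h : ∀ a ∈ P, f (single a 1) = g (single a 1)) {c : α →₀ R}
    (hc : c ∈ supported R R P) : f c = g c := by
  rw [supported_eq_span_single] at hc
  refine LinearMap.eqOn_span' ?_ hc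
  rintro _ ⟨a, ha, rfl⟩
  exact h a ha

end Supported

namespace FinsetChain

variable {V : Type*} [LinearOrder V]

noncomputable def sign (s : Finset V) (v : V) : ℚ := (-1) ^ #{u ∈ s | u < v}

lemma sign_mul_self (s : Finset V) (v : V) : sign s v * sign s v = 1 := by
  simp [sign, ← pow_add, ← two_mul, pow_mul]

lemma sign_erase_self (s : Finset V) (v : V) : sign (s.erase v) v = sign s v := by
  simp [sign, filter_erase]

lemma sign_insert_self (s : Finset V) (v : V) : sign (insert v s) v = sign s v := by
  simp [sign, filter_insert]

lemma sign_mul_sign_insert {s : Finset V} {u v : V} (hu : u ∈ s) (hv : v ∉ s) :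
    sign s v * sign (insert v s) u = -(sign s u * sign (s.erase u) v) := by
  rcases (ne_of_mem_of_not_mem hu hv).lt_or_gt with h | h
  · have hcard := card_erase_add_one (mem_filter.2 ⟨hu, h⟩ : u ∈ {x ∈ s | x < v})
    simp only [sign, filter_insert, if_neg h.not_gt, filter_erase] at *
    rw [← hcard, pow_succ]
    ring
  · have hnmem : u ∉ {x ∈ s | x < v} := fun hx => (mem_filter.1 hx).2.not_gt h
    simp only [sign, filter_insert, if_pos h, filter_erase, erase_eq_of_notMem hnmem,
      card_insert_of_notMem (fun hx => hv (mem_filter.1 hx).1), pow_succ]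
    ring

lemma sign_mul_sign_erase {s : Finset V} {u v : V} (hu : u ∈ s) (hv : v ∈ s) (huv : u ≠ v) :
    sign s v * sign (s.erase v) u = -(sign s u * sign (s.erase u) v) := by
  have key := sign_mul_sign_insert (mem_erase.2 ⟨huv, hu⟩) (notMem_erase v s)
  rw [insert_erase hv, sign_erase_self, erase_right_comm, sign_erase_self] at key
  linear_combination sign (s.erase v) u * sign s u * key
    - sign s v * sign (s.erase v) u * sign_mul_self s u
    - sign s u * sign (s.erase u) v * sign_mul_self (s.erase v) u

-- With `single s 1` read as `e_{s₁} ∧ ⋯ ∧ e_{sₖ}` (increasing order), `cone v` is `e_v ∧ ·`,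
-- while `uncone v` and `bd` are the contractions with `e_v^*` and with `∑ᵤ e_u^*`.
noncomputable def bd : (Finset V →₀ ℚ) →ₗ[ℚ] Finset V →₀ ℚ :=
  linearCombination ℚ fun s => ∑ u ∈ s, sign s u • single (s.erase u) 1

noncomputable def cone (v : V) : (Finset V →₀ ℚ) →ₗ[ℚ] Finset V →₀ ℚ :=
  linearCombination ℚ fun s => if v ∈ s then 0 else sign s v • single (insert v s) 1

noncomputable def uncone (v : V) : (Finset V →₀ ℚ) →ₗ[ℚ] Finset V →₀ ℚ :=
  linearCombination ℚ fun s => if v ∈ s then sign s v • single (s.erase v) 1 else 0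

lemma bd_single (s : Finset V) :
    bd (single s 1) = ∑ u ∈ s, sign s u • single (s.erase u) 1 := by
  simp [bd]

lemma cone_single (v : V) (s : Finset V) :
    cone v (single s 1) = if v ∈ s then 0 else sign s v • single (insert v s) 1 := by
  simp [cone]

lemma uncone_single (v : V) (s : Finset V) :
    uncone v (single s 1) = if v ∈ s then sign s v • single (s.erase v) 1 else 0 := by
  simp [uncone]

lemma bd_cone_add_cone_bd (v : V) (c : Finset V →₀ ℚ) : bd (cone v c) + cone v (bd c) = c := by
  refine eqOn_supported (f := bd ∘ₗ cone v + cone v ∘ₗ bd) (g := LinearMap.id) (P := Set.univ)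
    (fun s _ => ?_) (by simp)
  simp only [LinearMap.add_apply, LinearMap.comp_apply, LinearMap.id_apply, cone_single, bd_single]
  by_cases hv : v ∈ s
  · rw [if_pos hv, map_zero, map_sum, zero_add, Finset.sum_eq_single v]
    · rw [map_smul, cone_single, if_neg (notMem_erase v s), sign_erase_self,
        insert_erase hv, smul_smul, sign_mul_self, one_smul]
    · intro u _ hne
      rw [map_smul, cone_single, if_pos (mem_erase.2 ⟨fun h => hne h.symm, hv⟩), smul_zero]
    · exact fun h => absurd hv h
  · have hcancel : ∀ u ∈ s, sign s v • sign (insert v s) u • single ((insert v s).erase u) (1 : ℚ)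
        + cone v (sign s u • single (s.erase u) 1) = 0 := by
      intro u hu
      rw [map_smul, cone_single, if_neg (fun h => hv (mem_of_mem_erase h)), smul_smul, smul_smul,
        erase_insert_of_ne (ne_of_mem_of_not_mem hu hv).symm, sign_mul_sign_insert hu hv,
        neg_smul, neg_add_cancel]
    rw [if_neg hv, map_smul, bd_single, sum_insert hv, erase_insert hv, sign_insert_self, map_sum,
      smul_add, smul_smul, sign_mul_self, one_smul, Finset.smul_sum, add_assoc,
      ← sum_add_distrib, sum_eq_zero hcancel, add_zero]

lemma bd_cone (v : V) (c : Finset V →₀ ℚ) : bd (cone v c) = c - cone v (bd c) :=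
  eq_sub_of_add_eq (bd_cone_add_cone_bd v c)

lemma bd_uncone (v : V) (c : Finset V →₀ ℚ) : bd (uncone v c) = -uncone v (bd c) := by
  refine eqOn_supported (f := bd ∘ₗ uncone v) (g := -(uncone v ∘ₗ bd)) (P := Set.univ)
    (fun s _ => ?_) (by simp)
  simp only [LinearMap.comp_apply, LinearMap.neg_apply, uncone_single, bd_single, map_sum,
    map_smul]
  by_cases hv : v ∈ s
  · rw [if_pos hv, map_smul, bd_single, ← add_sum_erase s _ hv, if_neg (notMem_erase v s),
      smul_zero, zero_add, Finset.smul_sum, ← sum_neg_distrib]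
    refine sum_congr rfl fun u hu => ?_
    have huv := ne_of_mem_erase hu
    rw [if_pos (mem_erase.2 ⟨huv.symm, hv⟩), smul_smul, smul_smul, erase_right_comm,
      sign_mul_sign_erase (mem_of_mem_erase hu) hv huv, neg_smul]
  · simp [hv]

lemma bd_mem_supported {P Q : Set (Finset V)} (h : ∀ s ∈ P, ∀ u ∈ s, s.erase u ∈ Q)
    {c : Finset V →₀ ℚ} (hc : c ∈ supported ℚ ℚ P) : bd c ∈ supported ℚ ℚ Q :=
  map_mem_supported (fun s hs => by
    rw [bd_single]
    exact Submodule.sum_mem _ fun u hu => Submodule.smul_mem _ _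
      (single_mem_supported ℚ 1 (h s hs u hu))) hc

lemma cone_mem_supported {v : V} {P Q : Set (Finset V)} (h : ∀ s ∈ P, v ∉ s → insert v s ∈ Q)
    {c : Finset V →₀ ℚ} (hc : c ∈ supported ℚ ℚ P) : cone v c ∈ supported ℚ ℚ Q :=
  map_mem_supported (fun s hs => by
    rw [cone_single]
    split_ifs with hv
    · exact zero_mem _
    · exact Submodule.smul_mem _ _ (single_mem_supported ℚ 1 (h s hs hv))) hc

lemma uncone_mem_supported {v : V} {P Q : Set (Finset V)} (h : ∀ s ∈ P, v ∈ s → s.erase v ∈ Q)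
    {c : Finset V →₀ ℚ} (hc : c ∈ supported ℚ ℚ P) : uncone v c ∈ supported ℚ ℚ Q :=
  map_mem_supported (fun s hs => by
    rw [uncone_single]
    split_ifs with hv
    · exact Submodule.smul_mem _ _ (single_mem_supported ℚ 1 (h s hs hv))
    · exact zero_mem _) hc

lemma cone_uncone {v : V} {c : Finset V →₀ ℚ} (hc : c ∈ supported ℚ ℚ {s | v ∈ s}) :
    cone v (uncone v c) = c :=
  eqOn_supported (f := cone v ∘ₗ uncone v) (g := LinearMap.id) (fun s (hv : v ∈ s) => by
    rw [LinearMap.comp_apply, uncone_single, if_pos hv, map_smul, cone_single,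
      if_neg (notMem_erase v s), insert_erase hv, sign_erase_self, smul_smul, sign_mul_self,
      one_smul, LinearMap.id_apply]) hc

lemma uncone_eq_zero {v : V} {c : Finset V →₀ ℚ} (hc : c ∈ supported ℚ ℚ {s | v ∉ s}) :
    uncone v c = 0 :=
  eqOn_supported (g := 0) (fun s (hv : v ∉ s) => by simp [uncone_single, hv]) hc

lemma filter_add_cone_uncone (v : V) (z : Finset V →₀ ℚ) :
    z.filter (v ∉ ·) + cone v (uncone v z) = z := by
  have hin : z.filter (v ∈ ·) ∈ supported ℚ ℚ {s | v ∈ s} := fun s hs => by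
    simp only [support_filter, coe_filter] at hs; exact hs.2
  have hout : z.filter (v ∉ ·) ∈ supported ℚ ℚ {s | v ∉ s} := fun s hs => by
    simp only [support_filter, coe_filter] at hs; exact hs.2
  have hcone : cone v (uncone v z) = z.filter (v ∈ ·) := by
    conv_lhs => rw [← filter_add_filter_not z (v ∈ ·)]
    rw [map_add, map_add, uncone_eq_zero hout, map_zero, add_zero, cone_uncone hin]
  rw [hcone, add_comm, filter_add_filter_not]

lemma bd_filter_add_eq_zero {v : V} {z w : Finset V →₀ ℚ} (hz : bd z = 0)
    (hw : bd w = uncone v z) : bd (z.filter (v ∉ ·) + w) = 0 := by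
  have hy : bd (uncone v z) = 0 := by rw [bd_uncone, hz, map_zero, neg_zero]
  have h := congrArg bd (filter_add_cone_uncone v z)
  rw [map_add, bd_cone, hy, map_zero, sub_zero, hz] at h
  rw [map_add, hw, h]

lemma filter_add_eq_add_bd_cone {v : V} {z w : Finset V →₀ ℚ} (hw : bd w = uncone v z) :
    z.filter (v ∉ ·) + w = z + bd (cone v w) := by
  rw [bd_cone, hw]
  linear_combination (norm := module) filter_add_cone_uncone v z

end FinsetChain

namespace FinMatroid

section

variable {V : Type*} [DecidableEq V]

def contract (N : FinMatroid V) (v : V) (hv : N.Indep {v}) : FinMatroid V where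
  Indep I := v ∉ I ∧ N.Indep (insert v I)
  empty_indep := ⟨notMem_empty v, by simpa using hv⟩
  indep_subset _ _ hs hts :=
    ⟨fun h => hs.1 (hts h), N.indep_subset hs.2 (insert_subset_insert v hts)⟩
  indep_exchange s t hs ht hcard := by
    obtain ⟨x, hxt, hxs, hx⟩ := N.indep_exchange hs.2 ht.2 (by
      rw [card_insert_of_notMem hs.1, card_insert_of_notMem ht.1]; omega)
    have hxv : x ≠ v := fun h => hxs (h ▸ mem_insert_self v s)
    exact ⟨x, (mem_insert.1 hxt).resolve_left hxv, fun h => hxs (mem_insert_of_mem h),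
      fun h => (mem_insert.1 h).elim (fun h => hxv h.symm) hs.1, by rwa [insert_comm]⟩

lemma exists_indep_card_eq_rk (N : FinMatroid V) (S : Finset V) :
    ∃ B ⊆ S, N.Indep B ∧ #B = N.rk S :=
  Nat.sSup_mem (s := {n | ∃ I ⊆ S, N.Indep I ∧ #I = n})
    ⟨0, ∅, empty_subset S, N.empty_indep, card_empty⟩
    ⟨#S, fun _ ⟨_, hIS, _, hI⟩ => hI ▸ card_le_card hIS⟩

def indepFaces (N : FinMatroid V) (S : Finset V) (n : ℕ) : Set (Finset V) :=
  {s | N.Indep s ∧ s ⊆ S ∧ #s = n}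

variable {N : FinMatroid V} {S s : Finset V} {n : ℕ} {v : V}

lemma indepFaces_mono {T : Finset V} (h : S ⊆ T) : N.indepFaces S n ⊆ N.indepFaces T n :=
  fun _ ⟨hs, hsS, hscard⟩ => ⟨hs, hsS.trans h, hscard⟩

lemma mem_indepFaces_erase (hs : s ∈ N.indepFaces S n) (hvs : v ∉ s) :
    s ∈ N.indepFaces (S.erase v) n :=
  ⟨hs.1, subset_erase.2 ⟨hs.2.1, hvs⟩, hs.2.2⟩

lemma contract_indepFaces_subset (hv : N.Indep {v}) :
    (N.contract v hv).indepFaces S n ⊆ N.indepFaces S n :=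
  fun s ⟨⟨_, hs⟩, hsS, hscard⟩ => ⟨N.indep_subset hs (subset_insert v s), hsS, hscard⟩

lemma erase_mem_contract_indepFaces (hv : N.Indep {v}) (hs : s ∈ N.indepFaces S (n + 1))
    (hvs : v ∈ s) : s.erase v ∈ (N.contract v hv).indepFaces (S.erase v) n :=
  ⟨⟨notMem_erase v s, by rw [insert_erase hvs]; exact hs.1⟩, erase_subset_erase v hs.2.1,
    by rw [card_erase_of_mem hvs, hs.2.2, Nat.add_sub_cancel]⟩

lemma insert_mem_indepFaces_of_contract (hv : N.Indep {v}) (hvS : v ∈ S)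
    (hs : s ∈ (N.contract v hv).indepFaces (S.erase v) n) : insert v s ∈ N.indepFaces S (n + 1) :=
  ⟨hs.1.2, insert_subset hvS (hs.2.1.trans (erase_subset v S)),
    by rw [card_insert_of_notMem hs.1.1, hs.2.2]⟩

end

section

open FinsetChain

variable {V : Type*} [LinearOrder V]

theorem exists_bd_eq_of_lt_card {N : FinMatroid V} {S B : Finset V} {n : ℕ}
    (hBS : B ⊆ S) (hB : N.Indep B) (hn : n < #B) {z : Finset V →₀ ℚ}
    (hz : z ∈ supported ℚ ℚ (N.indepFaces S n)) (hzc : bd z = 0) :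
    ∃ w ∈ supported ℚ ℚ (N.indepFaces S (n + 1)), bd w = z := by
  induction S using Finset.strongInduction generalizing N n B z with
  | H S ih =>
  obtain ⟨v, hvB⟩ : B.Nonempty := card_pos.1 (by omega)
  have hvS := hBS hvB
  by_cases hcone : ∀ s ∈ z.support, v ∉ s → N.Indep (insert v s)
  · refine ⟨cone v z, cone_mem_supported (fun s hs hvs => ?_) (mem_supported_support ℚ z), ?_⟩
    · obtain ⟨-, hsS, hscard⟩ := hz hs
      exact ⟨hcone s hs hvs, insert_subset hvS hsS, by rw [card_insert_of_notMem hvs, hscard]⟩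
    · rw [bd_cone, hzc, map_zero, sub_zero]
  push Not at hcone
  obtain ⟨s₀, hs₀z, hvs₀, hdep⟩ := hcone
  obtain ⟨hs₀, hs₀S, hs₀card⟩ := hz hs₀z
  have hv : N.Indep {v} := N.indep_subset hB (singleton_subset_iff.2 hvB)
  obtain ⟨m, rfl⟩ : ∃ m, n = m + 1 := Nat.exists_eq_succ_of_ne_zero fun h => hdep <| by
    rwa [card_eq_zero.1 (hs₀card.trans h), insert_empty]
  have hsub : S.erase v ⊂ S := erase_ssubset hvS
  obtain ⟨w, hw, hwz⟩ := ih _ hsub (N := N.contract v hv) (B := B.erase v) (n := m)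
    (erase_subset_erase v hBS) ⟨notMem_erase v B, by rwa [insert_erase hvB]⟩
    (by rw [card_erase_of_mem hvB]; omega)
    (uncone_mem_supported (fun s hs hvs => erase_mem_contract_indepFaces hv hs hvs) hz)
    (by rw [bd_uncone, hzc, map_zero, neg_zero])
  obtain ⟨x, hxB, hxs₀, hx⟩ := N.indep_exchange hs₀ hB (hs₀card ▸ hn)
  have hxv : x ≠ v := by rintro rfl; exact hdep hx
  have hz₂ : z.filter (v ∉ ·) + w ∈ supported ℚ ℚ (N.indepFaces (S.erase v) (m + 1)) := by
    refine add_mem (fun s hs => ?_) (supported_mono (contract_indepFaces_subset hv) hw)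
    simp only [support_filter, coe_filter] at hs
    exact mem_indepFaces_erase (hz hs.1) hs.2
  obtain ⟨u, hu, huz⟩ := ih _ hsub (B := insert x s₀)
    (insert_subset (mem_erase.2 ⟨hxv, hBS hxB⟩) (subset_erase.2 ⟨hs₀S, hvs₀⟩)) hx
    (by rw [card_insert_of_notMem hxs₀, hs₀card]; omega) hz₂ (bd_filter_add_eq_zero hzc hwz)
  refine ⟨u - cone v w, sub_mem (supported_mono (indepFaces_mono (erase_subset v S)) hu)
    (cone_mem_supported (fun s hs _ => insert_mem_indepFaces_of_contract hv hvS hs) hw), ?_⟩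
  rw [map_sub, huz, filter_add_eq_add_bd_cone hwz, add_sub_cancel_right]

end

end FinMatroid

namespace SimplicialCpx

open FinsetChain

variable {V : Type*} (X : SimplicialCpx V)

noncomputable def toFinsetChain (n : ℕ) : X.Chain n →ₗ[ℚ] Finset V →₀ ℚ :=
  lmapDomain ℚ ℚ Subtype.val

lemma toFinsetChain_injective (n : ℕ) : Function.Injective (X.toFinsetChain n) :=
  mapDomain_injective Subtype.val_injective

lemma range_toFinsetChain (n : ℕ) :
    LinearMap.range (X.toFinsetChain n) = supported ℚ ℚ {s | s ∈ X.faces ∧ #s = n} := by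
  rw [LinearMap.range_eq_map, ← supported_univ, toFinsetChain, lmapDomain_supported,
    Set.image_univ, Subtype.range_coe_subtype]

variable [LinearOrder V]

lemma toFinsetChain_bdry (n : ℕ) (c : X.Chain (n + 1)) :
    X.toFinsetChain n (X.bdry n c) = bd (X.toFinsetChain (n + 1) c) := by
  have : X.toFinsetChain n ∘ₗ X.bdry n = bd ∘ₗ X.toFinsetChain (n + 1) := by
    ext a : 2
    simp [bdry, toFinsetChain, bd_single, sign, ← sum_attach (s := a.1)]
  exact LinearMap.congr_fun this c

lemma bd_toFinsetChain_eq_zero {n : ℕ} {z : X.Chain n} (hz : z ∈ X.cycles n) :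
    bd (X.toFinsetChain n z) = 0 := by
  cases n with
  | zero =>
    have h := X.range_toFinsetChain 0 ▸ LinearMap.mem_range_self (X.toFinsetChain 0) z
    have := bd_mem_supported (Q := ∅) (fun s hs u hu => by
      rw [card_eq_zero.1 hs.2] at hu; exact absurd hu (notMem_empty u)) h
    rwa [supported_empty, Submodule.mem_bot] at this
  | succ m => rw [← toFinsetChain_bdry, show X.bdry m z = 0 from hz, map_zero]

lemma subsingleton_redH_of_forall_exists_bd {n : ℕ}
    (h : ∀ z ∈ supported ℚ ℚ {s | s ∈ X.faces ∧ #s = n}, bd z = 0 →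
      ∃ w ∈ supported ℚ ℚ {s | s ∈ X.faces ∧ #s = n + 1}, bd w = z) :
    Subsingleton (X.redH n) := by
  refine Submodule.Quotient.subsingleton_iff.2 (Submodule.eq_top_iff'.2 fun z => ?_)
  obtain ⟨w', hw', hw'z⟩ := h _ (X.range_toFinsetChain n ▸ LinearMap.mem_range_self _ z.1)
    (X.bd_toFinsetChain_eq_zero z.2)
  obtain ⟨w, rfl⟩ := X.range_toFinsetChain (n + 1) ▸ hw'
  exact ⟨w, X.toFinsetChain_injective n (by rw [toFinsetChain_bdry, hw'z]; rfl)⟩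

lemma le_eta_of_forall_subsingleton {k : ℕ} (h : ∀ n < k, Subsingleton (X.redH n)) :
    (k : ℕ∞) ≤ X.eta := by
  refine le_sInf ?_
  rintro _ ⟨m, rfl, hm⟩
  by_contra hlt
  exact not_subsingleton _ (h m (by exact_mod_cast not_le.1 hlt))

end SimplicialCpx

theorem matroid_indep_complex_homology_general {V : Type*} [LinearOrder V]
    (N : FinMatroid V) (S : Finset V) :
    (N.rk S : ℕ∞) ≤ (N.indepComplex.induce ↑S).eta ∧
      ∀ n : ℕ, n < N.rk S → Subsingleton ((N.indepComplex.induce ↑S).redH n) := by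
  set X := N.indepComplex.induce ↑S
  have hfaces : ∀ n, {s | s ∈ X.faces ∧ #s = n} = N.indepFaces S n := fun n => by
    ext s
    simp [X, SimplicialCpx.induce, FinMatroid.indepComplex, FinMatroid.indepFaces, and_assoc]
  have hvanish : ∀ n < N.rk S, Subsingleton (X.redH n) := fun n hn => by
    obtain ⟨B, hBS, hB, hBcard⟩ := N.exists_indep_card_eq_rk S
    refine X.subsingleton_redH_of_forall_exists_bd fun z hz hzc => ?_
    rw [hfaces] at hz ⊢
    exact FinMatroid.exists_bd_eq_of_lt_card hBS hB (hBcard ▸ hn) hz hzc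
  exact ⟨X.le_eta_of_forall_subsingleton hvanish, hvanish⟩

/-- For a matroid `N` on ground set `V` with rank function `ρ` and independence
complex `Y`, every non-empty `S ⊆ V` satisfies `η(Y[S]) ≥ ρ(S)`, i.e.
`H̃ⱼ(Y[S];ℚ) = 0` for all `j < ρ(S) - 1` (in our indexing, `redH n = H̃_{n-1}`
vanishes for all `n < ρ(S)`). -/
theorem matroid_indep_complex_homology {V : Type*} [LinearOrder V]
    (N : FinMatroid V) (S : Finset V) (hS : S.Nonempty) :
    (N.rk S : ℕ∞) ≤ (N.indepComplex.induce ↑S).eta ∧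
      ∀ n : ℕ, n < N.rk S → Subsingleton ((N.indepComplex.induce ↑S).redH n) :=
  matroid_indep_complex_homology_general N S
end

section
/- Let V be finite vector configurations P₁, …, P_{d+1} in ℝ^d and x a point with x ∈ conv(P_i ∪ P_j) for all i < j. Let M be the oriented matroid of the vectors { p − x : p ∈ P₁ ∪ ⋯ ∪ P_{d+1} } and N the transversal matroid of the family {P₁, …, P_{d+1}}. Then every A ⊆ V with ρ_N(V − A) < rank(M) contains a positive circuit of M. -/
/-!
The rank of the oriented matroid is at most `d`, so fewer than `d` colours have an element
outside `A`; the set of such colours indexes a partial transversal of representatives lying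
outside `A`. Hence two colour classes `Pᵢ`, `Pⱼ` lie entirely in `A`. Writing `x` as a convex
combination of `Pᵢ ∪ Pⱼ` gives a positive dependence of the vectors `p - x` supported in `A`,
and a minimal one is a positive circuit.
-/

noncomputable section

variable {d : ℕ}

/-- The ground set: the disjoint union of the point sets `P₁, …, P_{d+1}`. -/
abbrev GroundSet (P : Fin (d + 1) → Finset (EuclideanSpace ℝ (Fin d))) : Type _ :=
  (i : Fin (d + 1)) × {p : EuclideanSpace ℝ (Fin d) // p ∈ P i}

/-- `Q` carries a positive linear dependence of the vector configuration `f`. -/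
def PosDep {V : Type*} [Fintype V] {E : Type*} [AddCommGroup E] [Module ℝ E]
    (f : V → E) (Q : Finset V) : Prop :=
  ∃ c : V → ℝ, (∀ v ∈ Q, 0 < c v) ∧ (∀ v ∉ Q, c v = 0) ∧ ∑ v, c v • f v = 0

/-- `Q` is a positive circuit of the oriented matroid of the vector configuration
`f`: a minimal non-empty set carrying a positive linear dependence. -/
def IsPosCircuitOf {V : Type*} [Fintype V] {E : Type*} [AddCommGroup E] [Module ℝ E]
    (f : V → E) (Q : Finset V) : Prop :=
  Q.Nonempty ∧ PosDep f Q ∧ ∀ Q' ⊂ Q, Q'.Nonempty → ¬ PosDep f Q'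

/-- A partial transversal of the family `{P i}`: a set admitting an injective system
of distinct representatives assignment into the colour classes. -/
def IsPartialTransversal (P : Fin (d + 1) → Finset (EuclideanSpace ℝ (Fin d)))
    (T : Finset (GroundSet P)) : Prop :=
  ∃ φ : GroundSet P → Fin (d + 1), Set.InjOn φ ↑T ∧ ∀ v ∈ T, (v.2 : EuclideanSpace ℝ (Fin d)) ∈ P (φ v)

/-- The rank function of the transversal matroid of the family `{P i}`. -/
def transversalRk (P : Fin (d + 1) → Finset (EuclideanSpace ℝ (Fin d)))
    (S : Set (GroundSet P)) : ℕ :=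
  sSup {n | ∃ T : Finset (GroundSet P), ↑T ⊆ S ∧ IsPartialTransversal P T ∧ T.card = n}

section PositiveDependence

variable {V E : Type*} [Fintype V] [AddCommGroup E] [Module ℝ E]

theorem exists_isPosCircuitOf_subset (f : V → E) {Q : Finset V} (hne : Q.Nonempty)
    (hdep : PosDep f Q) : ∃ Q' ⊆ Q, IsPosCircuitOf f Q' := by
  induction Q using Finset.strongInduction with
  | H Q ih =>
    by_cases hmin : ∀ Q' ⊂ Q, Q'.Nonempty → ¬ PosDep f Q'
    · exact ⟨Q, subset_rfl, hne, hdep, hmin⟩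
    · push Not at hmin
      obtain ⟨Q', hQ'Q, hne', hdep'⟩ := hmin
      obtain ⟨Q'', hQ''Q', hcirc⟩ := ih Q' hQ'Q hne' hdep'
      exact ⟨Q'', hQ''Q'.trans hQ'Q.subset, hcirc⟩

theorem posDep_filter_pos {f : V → E} {c : V → ℝ} (hc : ∀ v, 0 ≤ c v)
    (hsum : ∑ v, c v • f v = 0) : PosDep f (Finset.univ.filter fun v => 0 < c v) :=
  ⟨c, fun v hv => (Finset.mem_filter.1 hv).2,
    fun v hv => le_antisymm (not_lt.1 fun h => hv (by simpa using h)) (hc v), hsum⟩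

theorem exists_posDep_sub_of_mem_convexHull {π : V → E} {Q : Finset V} {x : E}
    (hx : x ∈ convexHull ℝ (π '' ↑Q)) :
    ∃ Q' ⊆ Q, Q'.Nonempty ∧ PosDep (fun v => π v - x) Q' := by
  classical
  -- pick one index per point, so that weights on points become weights on indices
  obtain ⟨u, huQ, hinj, himg⟩ := Finset.exists_subset_injOn_image_eq_of_surjOn (f := π)
    (↑Q) (Q.image π) (fun _ hy => Finset.mem_image.1 hy)
  rw [← Finset.coe_image, ← himg, Finset.mem_convexHull'] at hx
  obtain ⟨w, hw₀, hw₁, hwx⟩ := hx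
  rw [Finset.sum_image hinj] at hw₁ hwx
  set c : V → ℝ := fun v => if v ∈ u then w (π v) else 0 with hc
  have hc₀ : ∀ v, 0 ≤ c v := fun v => by
    by_cases hv : v ∈ u
    · simpa [hc, hv] using hw₀ _ (Finset.mem_image_of_mem π hv)
    · simp [hc, hv]
  have hsum : ∑ v, c v • (π v - x) = 0 := by
    simp only [hc, ite_smul, zero_smul, Finset.sum_ite_mem, Finset.univ_inter, smul_sub,
      Finset.sum_sub_distrib, ← Finset.sum_smul, hw₁, hwx, one_smul, sub_self]
  refine ⟨Finset.univ.filter fun v => 0 < c v, fun v hv => ?_, ?_, posDep_filter_pos hc₀ hsum⟩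
  · by_contra hvQ
    have hvu : v ∉ u := fun h => hvQ (huQ h)
    simp [hc, hvu] at hv
  · obtain ⟨v, hvu, hv⟩ := Finset.exists_lt_of_sum_lt (s := u) (f := 0)
      (g := fun v => w (π v)) (by simp [hw₁])
    exact ⟨v, by simpa [hc, hvu] using hv⟩

end PositiveDependence

section Transversal

variable {P : Fin (d + 1) → Finset (EuclideanSpace ℝ (Fin d))}

theorem IsPartialTransversal.card_le_transversalRk {S : Set (GroundSet P)}
    {T : Finset (GroundSet P)} (hT : IsPartialTransversal P T) (hTS : ↑T ⊆ S) :
    T.card ≤ transversalRk P S :=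
  le_csSup ⟨Fintype.card (GroundSet P), by rintro n ⟨T', -, -, rfl⟩; exact T'.card_le_univ⟩
    ⟨T, hTS, hT, rfl⟩

theorem card_image_fst_le_transversalRk {S : Set (GroundSet P)} {T : Finset (GroundSet P)}
    (hTS : ↑T ⊆ S) : (T.image Sigma.fst).card ≤ transversalRk P S := by
  -- one representative per colour met by `T` forms a partial transversal
  obtain ⟨u, huT, hinj, himg⟩ := Finset.exists_subset_injOn_image_eq_of_surjOn (f := Sigma.fst)
    (T : Set (GroundSet P)) (T.image Sigma.fst) (fun _ hi => Finset.mem_image.1 hi)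
  have hu : IsPartialTransversal P u := ⟨Sigma.fst, hinj, fun v _ => v.2.2⟩
  rw [← himg, Finset.card_image_of_injOn hinj]
  exact hu.card_le_transversalRk (huT.trans hTS)

theorem exists_ne_colours_disjoint_of_transversalRk_lt {S : Set (GroundSet P)}
    (h : transversalRk P S < d) :
    ∃ i j, i ≠ j ∧ ∀ v : GroundSet P, (v.1 = i ∨ v.1 = j) → v ∉ S := by
  classical
  set C := (Finset.univ.filter (· ∈ S)).image (Sigma.fst : GroundSet P → Fin (d + 1))
  have hC : C.card < d :=
    (card_image_fst_le_transversalRk (by simp)).trans_lt h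
  have hCc : 1 < Cᶜ.card := by
    rw [Finset.card_compl, Fintype.card_fin]
    omega
  obtain ⟨i, hi, j, hj, hij⟩ := Finset.one_lt_card.1 hCc
  refine ⟨i, j, hij, fun v hv hvS => ?_⟩
  have hvC : v.1 ∈ C := Finset.mem_image_of_mem _ (by simpa using hvS)
  rcases hv with rfl | rfl
  exacts [Finset.mem_compl.1 hi hvC, Finset.mem_compl.1 hj hvC]

end Transversal

/-- Verification of the hypothesis of the main theorem in the realizable case:
if `x ∈ conv (Pᵢ ∪ Pⱼ)` for all `i < j`, then every `A ⊆ V` whose complement has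
transversal-matroid rank less than the rank of the oriented matroid of the vectors
`{p - x}` (namely `dim span {p - x}`) contains a positive circuit of that oriented
matroid. -/
theorem realizable_hypothesis
    (P : Fin (d + 1) → Finset (EuclideanSpace ℝ (Fin d)))
    (x : EuclideanSpace ℝ (Fin d))
    (hx : ∀ i j : Fin (d + 1), i < j →
      x ∈ convexHull ℝ ((P i : Set (EuclideanSpace ℝ (Fin d))) ∪ ↑(P j)))
    (f : GroundSet P → EuclideanSpace ℝ (Fin d))
    (hf : ∀ v, f v = (v.2 : EuclideanSpace ℝ (Fin d)) - x)
    (A : Set (GroundSet P))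
    (hA : transversalRk P (Set.univ \ A) <
      Module.finrank ℝ (Submodule.span ℝ (Set.range f))) :
    ∃ Q : Finset (GroundSet P), ↑Q ⊆ A ∧ IsPosCircuitOf f Q := by
  have hrank : Module.finrank ℝ (Submodule.span ℝ (Set.range f)) ≤ d := by
    simpa using Submodule.finrank_le (Submodule.span ℝ (Set.range f))
  obtain ⟨i, j, hij, hijA⟩ := exists_ne_colours_disjoint_of_transversalRk_lt (hA.trans_le hrank)
  set Q := Finset.univ.filter fun v : GroundSet P => v.1 = i ∨ v.1 = j
  have hxQ :
      x ∈ convexHull ℝ ((fun v : GroundSet P => (v.2 : EuclideanSpace ℝ (Fin d))) '' ↑Q) := by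
    refine convexHull_mono ?_ (hij.lt_or_gt.elim (hx i j) fun h => Set.union_comm _ _ ▸ hx j i h)
    rintro p (hp | hp)
    exacts [⟨⟨i, p, hp⟩, by simp [Q], rfl⟩, ⟨⟨j, p, hp⟩, by simp [Q], rfl⟩]
  obtain ⟨Q', hQ'Q, hne, hdep⟩ := exists_posDep_sub_of_mem_convexHull hxQ
  rw [← funext hf] at hdep
  obtain ⟨C, hCQ', hC⟩ := exists_isPosCircuitOf_subset f hne hdep
  refine ⟨C, fun v hv => ?_, hC⟩
  have hvQ : v ∈ Q := hQ'Q (hCQ' hv)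
  simpa using hijA v (by simpa [Q] using hvQ)
end
end
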